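/- Let f ∈ L^p(μ) on the weighted homogeneous tree and λ > 0. Then there exists a countable family {R_i} of pairwise disjoint admissible trapezoids such that the level set Ω_{λ^p} = {x : M(|f|^p)(x) > λ^p} of the trapezoidal maximal function is contained in E = ⋃_i R̃_i, and μ(E) ≤ Σ_i μ(R̃_i) ≤ 4 Σ_i μ(R_i) ≤ 4 λ^{-p} ‖f‖_{L^p}^p. -/

import Mathlib

open scoped ENNReal NNReal
open MeasureTheory Filter

/-- An infinite homogeneous tree of order `q+1`: a connected acyclic graph in which
every vertex has exactly `q+1` neighbours, equipped with a doubly-infinite geodesic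
`geo : ℤ → V` (the labelling `N` is the inverse of `geo`) and the associated level
function `lev`, satisfying `lev (geo i) = i`, changing by `±1` along edges, and such
that every vertex has exactly one neighbour lying directly above it. -/
structure HomTree (q : ℕ) where
  V : Type
  G : SimpleGraph V
  conn : G.Connected
  acyclic : G.IsAcyclic
  degree : ∀ v : V, (G.neighborSet v).ncard = q + 1
  lev : V → ℤ
  geo : ℤ → V
  geo_dist : ∀ i j : ℤ, G.dist (geo i) (geo j) = (i - j).natAbs
  lev_geo : ∀ i : ℤ, lev (geo i) = i
  lev_adj : ∀ v w : V, G.Adj v w → lev w = lev v + 1 ∨ lev w = lev v - 1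
  unique_above : ∀ v : V, ∃! w : V, G.Adj v w ∧ lev w = lev v + 1

namespace HomTree

variable {q : ℕ}

/-- Graph distance on the tree. -/
noncomputable def dist (T : HomTree q) (x y : T.V) : ℕ := T.G.dist x y

/-- `x` lies below `y`. -/
def below (T : HomTree q) (x y : T.V) : Prop := T.lev x = T.lev y - T.dist x y

/-- The weighted measure `μ(A) = ∑_{x ∈ A} q^{ℓ(x)}`. -/
noncomputable def mu (T : HomTree q) (A : Set T.V) : ℝ≥0∞ :=
  ∑' x : A, (q : ℝ≥0∞) ^ (T.lev x.1)

def sphere (T : HomTree q) (x₀ : T.V) (r : ℕ) : Set T.V := {x | T.dist x x₀ = r}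

def ball (T : HomTree q) (x₀ : T.V) (r : ℕ) : Set T.V := {x | T.dist x x₀ ≤ r}

/-- An admissible trapezoid: either a degenerate singleton `{root}` (with height 1), or
the set of vertices below the root spanning levels `[h, 2h)` under it. -/
structure Trapezoid (T : HomTree q) where
  root : T.V
  height : ℕ
  degenerate : Bool
  height_pos : 1 ≤ height
  deg_height : degenerate = true → height = 1

namespace Trapezoid

variable {T : HomTree q}

/-- The vertex set of the admissible trapezoid. -/
def set (R : T.Trapezoid) : Set T.V :=
  if R.degenerate then {R.root}
  else {x | T.below x R.root ∧ (R.height : ℤ) ≤ T.lev R.root - T.lev x ∧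
        T.lev R.root - T.lev x < 2 * (R.height : ℤ)}

/-- The envelope (Calderón–Zygmund set) of the admissible trapezoid:
vertices below the root with `h/2 ≤ ℓ(x_R) - ℓ(x) < 4h`. -/
def envelope (R : T.Trapezoid) : Set T.V :=
  if R.degenerate then {R.root}
  else {x | T.below x R.root ∧ (R.height : ℤ) ≤ 2 * (T.lev R.root - T.lev x) ∧
        T.lev R.root - T.lev x < 4 * (R.height : ℤ)}

/-- The width `w(R) = q^{ℓ(x_R)}`. -/
noncomputable def width (R : T.Trapezoid) : ℝ≥0∞ := (q : ℝ≥0∞) ^ (T.lev R.root)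

/-- The dilated set `R̃* = {x : d(x, R̃) < h(R̃)/4}`. -/
def dilate (R : T.Trapezoid) : Set T.V :=
  {x | ∃ y ∈ R.envelope, 4 * T.dist x y < R.height}

end Trapezoid

/-- `‖f‖_{L^p(μ)}^p = ∑_x |f(x)|^p q^{ℓ(x)}`. -/
noncomputable def lpPow (T : HomTree q) (f : T.V → ℂ) (p : ℝ) : ℝ≥0∞ :=
  ∑' x : T.V, (‖f x‖₊ : ℝ≥0∞) ^ p * (q : ℝ≥0∞) ^ (T.lev x)

/-- `∫_A |f|^p dμ`. -/
noncomputable def setIntPow (T : HomTree q) (f : T.V → ℂ) (p : ℝ) (A : Set T.V) : ℝ≥0∞ :=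
  ∑' x : A, (‖f x.1‖₊ : ℝ≥0∞) ^ p * (q : ℝ≥0∞) ^ (T.lev x.1)

/-- `‖f‖_{L¹(μ)}`. -/
noncomputable def l1Norm (T : HomTree q) (f : T.V → ℂ) : ℝ≥0∞ :=
  ∑' x : T.V, (‖f x‖₊ : ℝ≥0∞) * (q : ℝ≥0∞) ^ (T.lev x)

/-- `‖f‖_{L²(μ)}`. -/
noncomputable def l2Norm (T : HomTree q) (f : T.V → ℂ) : ℝ≥0∞ :=
  (T.lpPow f 2) ^ (2⁻¹ : ℝ)

/-- `‖f‖_{L^{p}(μ)}` for `p ∈ ℝ≥0∞`, including `p = ∞`. -/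
noncomputable def lpNormE (T : HomTree q) (p : ℝ≥0∞) (f : T.V → ℂ) : ℝ≥0∞ :=
  if p = ⊤ then ⨆ x, (‖f x‖₊ : ℝ≥0∞) else (T.lpPow f p.toReal) ^ (p.toReal)⁻¹

/-- The trapezoidal maximal function of a nonnegative density `g`. -/
noncomputable def maxFn (T : HomTree q) (g : T.V → ℝ≥0∞) (x : T.V) : ℝ≥0∞ :=
  ⨆ (R : T.Trapezoid) (_ : x ∈ R.set),
    (∑' y : R.set, g y.1 * (q : ℝ≥0∞) ^ (T.lev y.1)) / T.mu R.set

/-- `a` is a `(1,∞)`-atom associated with the Calderón–Zygmund set `R̃`. -/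
def IsInftyAtomOn (T : HomTree q) (R : T.Trapezoid) (a : T.V → ℂ) : Prop :=
  Function.support a ⊆ R.envelope ∧
  (∀ x, (‖a x‖₊ : ℝ≥0∞) ≤ (T.mu R.envelope)⁻¹) ∧
  ∑' x : T.V, a x * (q : ℂ) ^ (T.lev x) = 0

/-- `a` is a `(1,∞)`-atom. -/
def IsInftyAtom (T : HomTree q) (a : T.V → ℂ) : Prop :=
  ∃ R : T.Trapezoid, T.IsInftyAtomOn R a

/-- `a` is a `(1,p)`-atom, `1 < p < ∞`: supported in a Calderón–Zygmund set `R̃`,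
`‖a‖_{L^p} ≤ μ(R̃)^{1/p-1}` (equivalently `‖a‖_{L^p}^p ≤ μ(R̃)^{1-p}`), vanishing integral. -/
def IspAtom (T : HomTree q) (p : ℝ) (a : T.V → ℂ) : Prop :=
  ∃ R : T.Trapezoid, Function.support a ⊆ R.envelope ∧
    T.lpPow a p ≤ (T.mu R.envelope) ^ (1 - p) ∧
    ∑' x : T.V, a x * (q : ℂ) ^ (T.lev x) = 0

/-- `h` belongs to the atomic Hardy space `H^{1,∞}(μ)`. -/
def InH1 (T : HomTree q) (h : T.V → ℂ) : Prop :=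
  ∃ (c : ℕ → ℂ) (a : ℕ → T.V → ℂ), (∀ n, T.IsInftyAtom (a n)) ∧
    Summable (fun n => ‖c n‖) ∧ ∀ x, HasSum (fun n => c n * a n x) (h x)

/-- The `H^{1,∞}(μ)` norm: infimum of `∑ |λ_j|` over atomic decompositions. -/
noncomputable def H1Norm (T : HomTree q) (h : T.V → ℂ) : ℝ≥0∞ :=
  ⨅ (c : ℕ → ℂ) (a : ℕ → T.V → ℂ)
    (_ : (∀ n, T.IsInftyAtom (a n)) ∧ ∀ x, HasSum (fun n => c n * a n x) (h x)),
    ∑' n, (‖c n‖₊ : ℝ≥0∞)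

/-- `h` belongs to the atomic Hardy space `H^{1,p}(μ)`. -/
def InH1p (T : HomTree q) (p : ℝ) (h : T.V → ℂ) : Prop :=
  ∃ (c : ℕ → ℂ) (a : ℕ → T.V → ℂ), (∀ n, T.IspAtom p (a n)) ∧
    Summable (fun n => ‖c n‖) ∧ ∀ x, HasSum (fun n => c n * a n x) (h x)

/-- The `H^{1,p}(μ)` norm. -/
noncomputable def H1pNorm (T : HomTree q) (p : ℝ) (h : T.V → ℂ) : ℝ≥0∞ :=
  ⨅ (c : ℕ → ℂ) (a : ℕ → T.V → ℂ)
    (_ : (∀ n, T.IspAtom p (a n)) ∧ ∀ x, HasSum (fun n => c n * a n x) (h x)),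
    ∑' n, (‖c n‖₊ : ℝ≥0∞)

/-- The K-functional for the couple `(H¹(μ), L^{p₁}(μ))`. -/
noncomputable def KH1Lp (T : HomTree q) (p₁ : ℝ≥0∞) (t : ℝ≥0∞) (f : T.V → ℂ) : ℝ≥0∞ :=
  ⨅ (b : T.V → ℂ) (g : T.V → ℂ) (_ : ∀ x, f x = b x + g x),
    T.H1Norm b + t * T.lpNormE p₁ g

/-- The real interpolation norm `‖f‖_{θ,pr}` for the couple `(H¹(μ), L^{p₁}(μ))`. -/
noncomputable def interpNorm (T : HomTree q) (p₁ : ℝ≥0∞) (θ pr : ℝ) (f : T.V → ℂ) : ℝ≥0∞ :=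
  (∫⁻ t in Set.Ioi (0 : ℝ),
      (T.KH1Lp p₁ (ENNReal.ofReal t) f / (ENNReal.ofReal t) ^ θ) ^ pr *
        (ENNReal.ofReal t)⁻¹) ^ (1 / pr)

/-- The distinguished Laplacian `ℒ`. -/
noncomputable def lap (T : HomTree q) (f : T.V → ℂ) (x : T.V) : ℂ :=
  f x - (1 / (2 * ((Real.sqrt q : ℝ) : ℂ))) *
    ∑' y : T.G.neighborSet x, ((Real.sqrt q : ℝ) : ℂ) ^ (T.lev y.1 - T.lev x) * f y.1

end HomTree

open HomTree

section TreeMeasure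

variable {α : Type} (w : α → ℝ≥0∞)

noncomputable def treeMeasure : @MeasureTheory.Measure α ⊤ :=
  @MeasureTheory.Measure.sum α α ⊤ (fun x => w x • @MeasureTheory.Measure.dirac α ⊤ x)

lemma treeMeasure_apply (A : Set α) : treeMeasure w A = ∑' x : A, w x := by
  rw [treeMeasure, @MeasureTheory.Measure.sum_apply α α ⊤ _ A MeasurableSpace.measurableSet_top]
  have h : ∀ x : α, (w x • @MeasureTheory.Measure.dirac α ⊤ x) A = A.indicator w x := by
    intro x
    rw [MeasureTheory.Measure.smul_apply,
      @MeasureTheory.Measure.dirac_apply' α ⊤ A x MeasurableSpace.measurableSet_top]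
    by_cases hx : x ∈ A <;> simp [Set.indicator_apply, hx]
  simp_rw [h]
  exact (tsum_subtype A w).symm

end TreeMeasure

section Zorn

lemma exists_maximal_disjoint {α β : Type*} (P prev : Set α) (s : α → Set β) :
    ∃ A : Set α, A ⊆ P ∧
      (∀ R ∈ A, ∀ Q ∈ A, R ≠ Q → Disjoint (s R) (s Q)) ∧
      (∀ R ∈ A, ∀ Q ∈ prev, Disjoint (s R) (s Q)) ∧
      (∀ R ∈ P, (∀ Q ∈ prev, Disjoint (s R) (s Q)) →
        (∀ Q ∈ A, R ≠ Q → Disjoint (s R) (s Q)) → R ∈ A) := by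
  set C : Set (Set α) := {A | A ⊆ P ∧ (∀ R ∈ A, ∀ Q ∈ A, R ≠ Q → Disjoint (s R) (s Q)) ∧
      (∀ R ∈ A, ∀ Q ∈ prev, Disjoint (s R) (s Q))} with hC
  have hzorn : ∀ c ⊆ C, IsChain (fun x1 x2 => x1 ⊆ x2) c → ∃ ub ∈ C, ∀ s ∈ c, s ⊆ ub := by
    intro c hcC hchain
    refine ⟨⋃₀ c, ⟨?_, ?_, ?_⟩, fun t ht => Set.subset_sUnion_of_mem ht⟩
    · rintro y ⟨A, hA, hy⟩
      exact (hcC hA).1 hy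
    · rintro a ⟨A, hA, ha⟩ b ⟨B, hB, hb⟩ hab
      rcases eq_or_ne A B with h | h
      · subst h; exact (hcC hA).2.1 a ha b hb hab
      · rcases hchain.total hA hB with h' | h'
        · exact (hcC hB).2.1 a (h' ha) b hb hab
        · exact (hcC hA).2.1 a ha b (h' hb) hab
    · rintro a ⟨A, hA, ha⟩ Q hQ
      exact (hcC hA).2.2 a ha Q hQ
  obtain ⟨m, hm⟩ := zorn_subset C hzorn
  obtain ⟨⟨h1, h2, h3⟩, hmax⟩ := hm
  refine ⟨m, h1, h2, h3, ?_⟩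
  intro R hR hprev hdisj
  have hmem : m ∪ {R} ∈ C := by
    refine ⟨?_, ?_, ?_⟩
    · rintro y (hy | hy)
      · exact h1 hy
      · rw [Set.mem_singleton_iff] at hy; subst hy; exact hR
    · rintro a (ha | ha) b (hb | hb) hab
      · exact h2 a ha b hb hab
      · rw [Set.mem_singleton_iff] at hb; subst hb
        exact (hdisj a ha (Ne.symm hab)).symm
      · rw [Set.mem_singleton_iff] at ha; subst ha
        exact hdisj b hb hab
      · rw [Set.mem_singleton_iff] at ha hb; subst ha; subst hb; exact absurd rfl hab
    · rintro a (ha | ha) Q hQ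
      · exact h3 a ha Q hQ
      · rw [Set.mem_singleton_iff] at ha; subst ha; exact hprev Q hQ
  have hsub := hmax hmem Set.subset_union_left
  exact hsub (Set.mem_union_right m rfl)
end Zorn

namespace HomTree

variable {q : ℕ} (T : HomTree q)

lemma dist_def (x y : T.V) : T.dist x y = T.G.dist x y := rfl

lemma abs_lev_sub_le_length {x y : T.V} (p : T.G.Walk x y) :
    |T.lev x - T.lev y| ≤ (p.length : ℤ) := by
  induction p with
  | nil => simp
  | @cons u v z h p ih =>
    have h1 : |T.lev u - T.lev v| ≤ 1 := by
      rcases T.lev_adj u v h with h' | h' <;> rw [h'] <;> simp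
    have h2 := abs_sub_le (T.lev u) (T.lev v) (T.lev z)
    simp only [SimpleGraph.Walk.length_cons]
    push_cast
    linarith

lemma abs_lev_sub_le_dist (x y : T.V) : |T.lev x - T.lev y| ≤ (T.dist x y : ℤ) := by
  obtain ⟨p, hp⟩ := (T.conn.preconnected x y).exists_walk_length_eq_dist
  have h := T.abs_lev_sub_le_length p
  rw [hp] at h
  exact h

noncomputable def up (x : T.V) : T.V := (T.unique_above x).exists.choose

lemma adj_up (x : T.V) : T.G.Adj x (T.up x) := (T.unique_above x).exists.choose_spec.1

lemma lev_up (x : T.V) : T.lev (T.up x) = T.lev x + 1 := (T.unique_above x).exists.choose_spec.2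

lemma up_unique {x w : T.V} (h1 : T.G.Adj x w) (h2 : T.lev w = T.lev x + 1) : w = T.up x :=
  (T.unique_above x).unique ⟨h1, h2⟩ ⟨T.adj_up x, T.lev_up x⟩

lemma lev_upIter (x : T.V) (d : ℕ) : T.lev ((T.up)^[d] x) = T.lev x + d := by
  induction d with
  | zero => simp
  | succ d ih =>
    rw [Function.iterate_succ_apply', T.lev_up, ih]
    push_cast
    ring

lemma dist_upIter (x : T.V) (d : ℕ) : T.dist x ((T.up)^[d] x) = d := by
  have hub : ∀ (d : ℕ) (x : T.V), T.dist x ((T.up)^[d] x) ≤ d := by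
    intro d
    induction d with
    | zero => intro x; simp [dist_def]
    | succ d ih =>
      intro x
      rw [Function.iterate_succ_apply']
      have htri := T.conn.dist_triangle (u := x) (v := (T.up)^[d] x) (w := T.up ((T.up)^[d] x))
      have hone : T.G.dist ((T.up)^[d] x) (T.up ((T.up)^[d] x)) ≤ 1 := by
        have := SimpleGraph.dist_le (SimpleGraph.Walk.cons (T.adj_up ((T.up)^[d] x))
          SimpleGraph.Walk.nil)
        simpa using this
      have := ih x
      rw [dist_def] at *
      omega
  have hlow : (d : ℤ) ≤ (T.dist x ((T.up)^[d] x) : ℤ) := by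
    have h := T.abs_lev_sub_le_dist x ((T.up)^[d] x)
    rw [T.lev_upIter] at h
    have he : T.lev x - (T.lev x + d) = -(d : ℤ) := by ring
    rw [he, abs_neg, abs_of_nonneg (by positivity)] at h
    exact h
  have := hub d x
  omega

lemma below_upIter (x : T.V) (d : ℕ) : T.below x ((T.up)^[d] x) := by
  rw [HomTree.below, T.lev_upIter, T.dist_upIter]
  ring

lemma dist_eq_of_below {x r : T.V} (h : T.below x r) :
    (T.dist x r : ℤ) = T.lev r - T.lev x := by
  rw [HomTree.below] at h
  omega

lemma eq_upIter_of_below : ∀ (d : ℕ) (x r : T.V), T.below x r → T.dist x r = d →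
    r = (T.up)^[d] x := by
  intro d
  induction d with
  | zero =>
    intro x r hb hd
    rw [dist_def] at hd
    rcases SimpleGraph.dist_eq_zero_iff_eq_or_not_reachable.1 hd with h | h
    · rw [Function.iterate_zero_apply]; exact h.symm
    · exact absurd (T.conn.preconnected x r) h
  | succ d ih =>
    intro x r hb hd
    obtain ⟨pw, hpw⟩ := (T.conn.preconnected x r).exists_walk_length_eq_dist
    rw [← dist_def, hd] at hpw
    cases pw with
    | nil => simp at hpw
    | @cons _ v _ hadj p =>
      have hlen : p.length = d := by
        rw [SimpleGraph.Walk.length_cons] at hpw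
        omega
      have hlev_r : T.lev r = T.lev x + (d : ℤ) + 1 := by
        have h1 := T.dist_eq_of_below hb
        rw [hd] at h1
        push_cast at h1
        omega
      have habs := T.abs_lev_sub_le_length p
      rw [hlen] at habs
      rw [abs_le] at habs
      have hv : T.lev v = T.lev x + 1 := by
        rcases T.lev_adj x v hadj with h' | h'
        · exact h'
        · omega
      have hvr_le : T.dist v r ≤ d := by
        rw [dist_def]
        exact le_trans (SimpleGraph.dist_le p) (le_of_eq hlen)
      have hvr_ge : (d : ℤ) ≤ (T.dist v r : ℤ) := by
        have h := T.abs_lev_sub_le_dist v r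
        rw [abs_le] at h
        omega
      have hdvr : T.dist v r = d := by omega
      have hbvr : T.below v r := by
        rw [HomTree.below, hdvr]
        omega
      have hr := ih v r hbvr hdvr
      have hux : v = T.up x := T.up_unique hadj hv
      rw [hr, hux, ← Function.iterate_succ_apply]

lemma below_chain {x r r' : T.V} (h : T.below x r) (h' : T.below x r')
    (hle : T.lev r ≤ T.lev r') : T.below r r' := by
  obtain ⟨d1, hd1e⟩ : ∃ d, T.dist x r = d := ⟨_, rfl⟩
  obtain ⟨d2, hd2e⟩ : ∃ d, T.dist x r' = d := ⟨_, rfl⟩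
  have e1 := T.eq_upIter_of_below d1 x r h hd1e
  have e2 := T.eq_upIter_of_below d2 x r' h' hd2e
  have hd1 := T.dist_eq_of_below h
  have hd2 := T.dist_eq_of_below h'
  rw [hd1e] at hd1
  rw [hd2e] at hd2
  have hdd : d1 ≤ d2 := by omega
  have he : r' = (T.up)^[d2 - d1] r := by
    rw [e2, e1, ← Function.iterate_add_apply, Nat.sub_add_cancel hdd]
  rw [he]
  exact T.below_upIter r _

lemma below_trans {x r r' : T.V} (h : T.below x r) (h' : T.below r r') : T.below x r' := by
  obtain ⟨d1, hd1e⟩ : ∃ d, T.dist x r = d := ⟨_, rfl⟩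
  obtain ⟨d2, hd2e⟩ : ∃ d, T.dist r r' = d := ⟨_, rfl⟩
  have e1 := T.eq_upIter_of_below d1 x r h hd1e
  have e2 := T.eq_upIter_of_below d2 r r' h' hd2e
  have he : r' = (T.up)^[d2 + d1] x := by
    rw [e2, e1, ← Function.iterate_add_apply]
  rw [he]
  exact T.below_upIter x _

def fib (r : T.V) (d : ℕ) : Set T.V := {x | (T.up)^[d] x = r}

lemma mem_fib_iff {r x : T.V} {d : ℕ} :
    x ∈ T.fib r d ↔ (T.below x r ∧ T.dist x r = d) := by
  constructor
  · intro h
    have h' : (T.up)^[d] x = r := h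
    rw [← h']
    exact ⟨T.below_upIter x d, T.dist_upIter x d⟩
  · rintro ⟨hb, hd⟩
    exact (T.eq_upIter_of_below d x r hb hd).symm

lemma nbr_finite (v : T.V) : (T.G.neighborSet v).Finite :=
  Set.finite_of_ncard_ne_zero (by rw [T.degree]; omega)

lemma fib_one_eq (y : T.V) : T.fib y 1 = T.G.neighborSet y \ {T.up y} := by
  ext x
  simp only [fib, Set.mem_setOf_eq, Function.iterate_one, Set.mem_diff,
    SimpleGraph.mem_neighborSet, Set.mem_singleton_iff]
  constructor
  · intro h
    subst h
    refine ⟨(T.adj_up x).symm, ?_⟩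
    intro hcon
    have h1 := T.lev_up x
    have h2 := T.lev_up (T.up x)
    rw [← hcon] at h2
    omega
  · rintro ⟨hadj, hne⟩
    rcases T.lev_adj y x hadj with h' | h'
    · exact absurd (T.up_unique hadj h') hne
    · exact (T.up_unique hadj.symm (by omega)).symm

instance instCountableV : Countable T.V := by
  set x0 := T.geo 0 with hx0
  have hball : ∀ n : ℕ, {x : T.V | T.G.dist x x0 ≤ n}.Finite := by
    intro n
    induction n with
    | zero =>
      apply Set.Finite.subset (Set.finite_singleton x0)
      intro x hx
      simp only [Set.mem_setOf_eq, Nat.le_zero] at hx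
      rcases SimpleGraph.dist_eq_zero_iff_eq_or_not_reachable.1 hx with h | h
      · simp [h]
      · exact absurd (T.conn.preconnected x x0) h
    | succ n ih =>
      apply Set.Finite.subset (ih.union (ih.biUnion (fun y _ => T.nbr_finite y)))
      intro x hx
      simp only [Set.mem_setOf_eq] at hx
      by_cases h : T.G.dist x x0 ≤ n
      · exact Or.inl h
      · have hd : T.G.dist x x0 = n + 1 := by omega
        obtain ⟨pw, hpw⟩ := (T.conn.preconnected x x0).exists_walk_length_eq_dist
        rw [hd] at hpw
        cases pw with
        | nil => simp at hpw
        | @cons _ v _ hadj p =>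
          right
          have hlen : p.length = n := by
            rw [SimpleGraph.Walk.length_cons] at hpw
            omega
          have hvin : v ∈ {x : T.V | T.G.dist x x0 ≤ n} :=
            le_trans (SimpleGraph.dist_le p) (le_of_eq hlen)
          exact Set.mem_biUnion hvin ((SimpleGraph.mem_neighborSet _ _ _).2 hadj.symm)
  have hcnt : (Set.univ : Set T.V).Countable := by
    have hsub : (Set.univ : Set T.V) ⊆ ⋃ n : ℕ, {x : T.V | T.G.dist x x0 ≤ n} :=
      fun x _ => Set.mem_iUnion.2 ⟨T.G.dist x x0, by simp⟩
    exact Set.Countable.mono hsub (Set.countable_iUnion fun n => (hball n).countable)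
  exact Set.countable_univ_iff.mp hcnt

instance instCountableTrapezoid : Countable T.Trapezoid := by
  have hinj : Function.Injective
      (fun R : T.Trapezoid => (R.root, R.height, R.degenerate)) := by
    rintro ⟨r1, h1, d1, _, _⟩ ⟨r2, h2, d2, _, _⟩ h
    simp only [Prod.mk.injEq] at h
    obtain ⟨e1, e2, e3⟩ := h
    subst e1; subst e2; subst e3
    rfl
  exact Function.Injective.countable hinj

end HomTree

namespace HomTree

variable {q : ℕ} (T : HomTree q)

lemma mu_eq_treeMeasure (A : Set T.V) :
    T.mu A = treeMeasure (fun x => (q : ℝ≥0∞) ^ (T.lev x)) A := by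
  rw [HomTree.mu, treeMeasure_apply]

lemma mu_mono {A B : Set T.V} (h : A ⊆ B) : T.mu A ≤ T.mu B := by
  rw [T.mu_eq_treeMeasure, T.mu_eq_treeMeasure]
  exact MeasureTheory.measure_mono h

lemma mu_union (A B : Set T.V) (hd : Disjoint A B) : T.mu (A ∪ B) = T.mu A + T.mu B := by
  simp_rw [mu_eq_treeMeasure]
  exact MeasureTheory.measure_union hd MeasurableSpace.measurableSet_top

lemma mu_iUnion_le {ι : Type} [Countable ι] (A : ι → Set T.V) :
    T.mu (⋃ i, A i) ≤ ∑' i, T.mu (A i) := by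
  simp_rw [mu_eq_treeMeasure]
  exact MeasureTheory.measure_iUnion_le A

lemma mu_iUnion_eq {ι : Type} [Countable ι] (A : ι → Set T.V)
    (hd : Pairwise (Function.onFun Disjoint A)) :
    T.mu (⋃ i, A i) = ∑' i, T.mu (A i) := by
  simp_rw [mu_eq_treeMeasure]
  exact MeasureTheory.measure_iUnion hd (fun i => MeasurableSpace.measurableSet_top)

lemma mu_empty : T.mu (∅ : Set T.V) = 0 := by
  rw [HomTree.mu]
  exact tsum_empty

lemma mu_finite_const {A : Set T.V} (hA : A.Finite) (c : ℝ≥0∞)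
    (hc : ∀ x ∈ A, (q : ℝ≥0∞) ^ (T.lev x) = c) :
    T.mu A = A.ncard * c := by
  classical
  haveI := hA.fintype
  rw [HomTree.mu, tsum_fintype]
  calc (∑ x : A, (q : ℝ≥0∞) ^ (T.lev x.1))
      = ∑ _x : A, c := Finset.sum_congr rfl (fun x _ => hc x.1 x.2)
    _ = (Fintype.card A) • c := by rw [Finset.sum_const, Finset.card_univ]
    _ = A.ncard * c := by rw [← Nat.card_eq_fintype_card, Nat.card_coe_set_eq, nsmul_eq_mul]

lemma mu_singleton (r : T.V) : T.mu ({r} : Set T.V) = (q : ℝ≥0∞) ^ (T.lev r) := by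
  rw [T.mu_finite_const (Set.finite_singleton r) ((q : ℝ≥0∞) ^ (T.lev r))
    (by rintro x rfl; rfl)]
  simp

lemma ncard_fib_one (y : T.V) : (T.fib y 1).ncard = q := by
  rw [T.fib_one_eq, Set.ncard_diff_singleton_of_mem
    ((SimpleGraph.mem_neighborSet _ _ _).2 (T.adj_up y)), T.degree]
  omega

lemma lev_of_mem_fib_one {y x : T.V} (h : x ∈ T.fib y 1) : T.lev x = T.lev y - 1 := by
  have h' : T.up x = y := by
    have := h
    simpa [fib] using this
  have := T.lev_up x
  rw [h'] at this
  omega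

lemma mu_fib_one (hq : q ≠ 0) (y : T.V) :
    T.mu (T.fib y 1) = (q : ℝ≥0∞) ^ (T.lev y) := by
  have hq0 : (q : ℝ≥0∞) ≠ 0 := by exact_mod_cast hq
  have hqt : (q : ℝ≥0∞) ≠ ⊤ := ENNReal.natCast_ne_top q
  have hfin : (T.fib y 1).Finite := by
    rw [T.fib_one_eq]
    exact (T.nbr_finite y).diff
  rw [T.mu_finite_const hfin ((q : ℝ≥0∞) ^ (T.lev y - 1))
    (fun x hx => by rw [T.lev_of_mem_fib_one hx]), T.ncard_fib_one]
  calc (q : ℝ≥0∞) * (q : ℝ≥0∞) ^ (T.lev y - 1)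
      = (q : ℝ≥0∞) ^ (1 : ℤ) * (q : ℝ≥0∞) ^ (T.lev y - 1) := by rw [zpow_one]
    _ = (q : ℝ≥0∞) ^ (1 + (T.lev y - 1)) := (ENNReal.zpow_add hq0 hqt _ _).symm
    _ = (q : ℝ≥0∞) ^ (T.lev y) := by ring_nf

lemma fib_succ_eq (r : T.V) (d : ℕ) :
    T.fib r (d + 1) = ⋃ y : T.fib r d, T.fib y.1 1 := by
  ext x
  simp only [fib, Set.mem_setOf_eq, Set.mem_iUnion, Function.iterate_one]
  constructor
  · intro h
    refine ⟨⟨T.up x, ?_⟩, rfl⟩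
    show (T.up)^[d] (T.up x) = r
    rwa [← Function.iterate_succ_apply]
  · rintro ⟨⟨y, hy⟩, hxy⟩
    rw [Function.iterate_succ_apply, hxy]
    exact hy

lemma mu_fib (hq : q ≠ 0) (r : T.V) (d : ℕ) :
    T.mu (T.fib r d) = (q : ℝ≥0∞) ^ (T.lev r) := by
  induction d with
  | zero =>
    have h0 : T.fib r 0 = {r} := by
      ext x
      simp [fib, eq_comm]
    rw [h0, T.mu_singleton]
  | succ d ih =>
    rw [T.fib_succ_eq r d, T.mu_iUnion_eq _ ?_]
    · calc (∑' y : T.fib r d, T.mu (T.fib y.1 1))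
          = ∑' y : T.fib r d, (q : ℝ≥0∞) ^ (T.lev y.1) :=
            tsum_congr (fun y => T.mu_fib_one hq y.1)
        _ = T.mu (T.fib r d) := rfl
        _ = _ := ih
    · intro y y' hne
      rw [Function.onFun, Set.disjoint_left]
      intro a ha ha'
      have h1 : T.up a = y.1 := by simpa [fib] using ha
      have h2 : T.up a = y'.1 := by simpa [fib] using ha'
      exact hne (Subtype.ext (by rw [← h1, ← h2]))

lemma mu_between (hq : q ≠ 0) (r : T.V) (a b : ℕ) (hab : a ≤ b) :
    T.mu {x | T.below x r ∧ a ≤ T.dist x r ∧ T.dist x r < b} =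
      ((b - a : ℕ) : ℝ≥0∞) * (q : ℝ≥0∞) ^ (T.lev r) := by
  induction b, hab using Nat.le_induction with
  | base =>
    have he : {x | T.below x r ∧ a ≤ T.dist x r ∧ T.dist x r < a} = (∅ : Set T.V) := by
      ext x
      simp only [Set.mem_setOf_eq, Set.mem_empty_iff_false, iff_false, not_and]
      intro _ h1 h2
      omega
    rw [he, T.mu_empty]
    simp
  | succ b hb ih =>
    have hsplit : {x | T.below x r ∧ a ≤ T.dist x r ∧ T.dist x r < b + 1} =
        {x | T.below x r ∧ a ≤ T.dist x r ∧ T.dist x r < b} ∪ T.fib r b := by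
      ext x
      simp only [Set.mem_setOf_eq, Set.mem_union, T.mem_fib_iff]
      constructor
      · rintro ⟨h1, h2, h3⟩
        by_cases h : T.dist x r < b
        · exact Or.inl ⟨h1, h2, h⟩
        · exact Or.inr ⟨h1, by omega⟩
      · rintro (⟨h1, h2, h3⟩ | ⟨h1, h2⟩)
        · exact ⟨h1, h2, by omega⟩
        · exact ⟨h1, by omega, by omega⟩
    have hdisj : Disjoint {x | T.below x r ∧ a ≤ T.dist x r ∧ T.dist x r < b} (T.fib r b) := by
      rw [Set.disjoint_left]
      intro x hx hx'
      rw [T.mem_fib_iff] at hx'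
      simp only [Set.mem_setOf_eq] at hx
      omega
    rw [hsplit, T.mu_union _ _ hdisj, ih, T.mu_fib hq r b]
    have hc : ((b + 1 - a : ℕ) : ℝ≥0∞) = ((b - a : ℕ) : ℝ≥0∞) + 1 := by
      have h' : b + 1 - a = (b - a) + 1 := by omega
      rw [h']
      push_cast
      ring
    rw [hc, add_mul, one_mul]

end HomTree

namespace HomTree

variable {q : ℕ} (T : HomTree q)

lemma set_eq_between {R : T.Trapezoid} (hd : R.degenerate = false) :
    R.set = {x | T.below x R.root ∧ R.height ≤ T.dist x R.root ∧
      T.dist x R.root < 2 * R.height} := by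
  rw [Trapezoid.set, hd]
  simp only [Bool.false_eq_true, if_false]
  ext x
  simp only [Set.mem_setOf_eq]
  constructor
  · rintro ⟨h1, h2, h3⟩
    have hdist := T.dist_eq_of_below h1
    exact ⟨h1, by omega, by omega⟩
  · rintro ⟨h1, h2, h3⟩
    have hdist := T.dist_eq_of_below h1
    exact ⟨h1, by omega, by omega⟩

lemma envelope_eq_between {R : T.Trapezoid} (hd : R.degenerate = false) :
    R.envelope = {x | T.below x R.root ∧ (R.height + 1) / 2 ≤ T.dist x R.root ∧
      T.dist x R.root < 4 * R.height} := by
  rw [Trapezoid.envelope, hd]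
  simp only [Bool.false_eq_true, if_false]
  ext x
  simp only [Set.mem_setOf_eq]
  constructor
  · rintro ⟨h1, h2, h3⟩
    have hdist := T.dist_eq_of_below h1
    exact ⟨h1, by omega, by omega⟩
  · rintro ⟨h1, h2, h3⟩
    have hdist := T.dist_eq_of_below h1
    exact ⟨h1, by omega, by omega⟩

lemma set_eq_singleton {R : T.Trapezoid} (hd : R.degenerate = true) :
    R.set = {R.root} := by
  rw [Trapezoid.set, hd]
  simp

lemma envelope_eq_singleton {R : T.Trapezoid} (hd : R.degenerate = true) :
    R.envelope = {R.root} := by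
  rw [Trapezoid.envelope, hd]
  simp

lemma mu_trapezoid_set (hq : q ≠ 0) (R : T.Trapezoid) :
    T.mu R.set = (R.height : ℝ≥0∞) * (q : ℝ≥0∞) ^ (T.lev R.root) := by
  cases hd : R.degenerate with
  | false =>
    rw [T.set_eq_between hd, T.mu_between hq _ _ _ (by omega : R.height ≤ 2 * R.height)]
    congr 2
    omega
  | true =>
    have h1 := R.deg_height hd
    rw [T.set_eq_singleton hd, T.mu_singleton, h1]
    simp

lemma mu_trapezoid_envelope_le (hq : q ≠ 0) (R : T.Trapezoid) :
    T.mu R.envelope ≤ 4 * T.mu R.set := by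
  cases hd : R.degenerate with
  | true =>
    have he : R.envelope = R.set := by
      rw [T.envelope_eq_singleton hd, T.set_eq_singleton hd]
    rw [he]
    exact le_mul_of_one_le_left zero_le (by norm_num)
  | false =>
    rw [T.envelope_eq_between hd,
      T.mu_between hq _ _ _ (by omega : (R.height + 1) / 2 ≤ 4 * R.height),
      T.mu_trapezoid_set hq R]
    calc ((4 * R.height - (R.height + 1) / 2 : ℕ) : ℝ≥0∞) * (q : ℝ≥0∞) ^ (T.lev R.root)
        ≤ ((4 * R.height : ℕ) : ℝ≥0∞) * (q : ℝ≥0∞) ^ (T.lev R.root) :=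
          mul_le_mul_left (Nat.cast_le.2 (by omega)) _
      _ = 4 * ((R.height : ℝ≥0∞) * (q : ℝ≥0∞) ^ (T.lev R.root)) := by
          push_cast
          ring

lemma set_subset_envelope (R R' : T.Trapezoid) (hlev : T.lev R.root ≤ T.lev R'.root)
    {z : T.V} (hz : z ∈ R.set) (hz' : z ∈ R'.set) : R.set ⊆ R'.envelope := by
  intro x hx
  cases hd' : R'.degenerate with
  | true =>
    rw [T.set_eq_singleton hd'] at hz'
    rw [Set.mem_singleton_iff] at hz'
    rw [T.envelope_eq_singleton hd', Set.mem_singleton_iff]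
    cases hd : R.degenerate with
    | true =>
      rw [T.set_eq_singleton hd, Set.mem_singleton_iff] at hx hz
      rw [hx, ← hz, hz']
    | false =>
      exfalso
      rw [T.set_eq_between hd] at hz
      obtain ⟨h1, h2, _⟩ := hz
      have hdb := T.dist_eq_of_below h1
      have hzr : T.lev z = T.lev R'.root := by rw [hz']
      have hh := R.height_pos
      omega
  | false =>
    rw [T.set_eq_between hd'] at hz'
    obtain ⟨hbz', hz1', hz2'⟩ := hz'
    have hdz' := T.dist_eq_of_below hbz'
    have hh' := R'.height_pos
    rw [T.envelope_eq_between hd']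
    cases hd : R.degenerate with
    | true =>
      rw [T.set_eq_singleton hd, Set.mem_singleton_iff] at hx hz
      have hxz : x = z := by rw [hx, hz]
      subst hxz
      exact ⟨hbz', by omega, by omega⟩
    | false =>
      rw [T.set_eq_between hd] at hx hz
      obtain ⟨hbx, hx1, hx2⟩ := hx
      obtain ⟨hbz, hz1, hz2⟩ := hz
      have hdx := T.dist_eq_of_below hbx
      have hdz := T.dist_eq_of_below hbz
      have hh := R.height_pos
      have hbrr' : T.below R.root R'.root := T.below_chain hbz hbz' hlev
      have hbxr' : T.below x R'.root := T.below_trans hbx hbrr'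
      have hdxr' := T.dist_eq_of_below hbxr'
      refine ⟨hbxr', ?_, ?_⟩ <;> omega

lemma trapezoid_set_nonempty (hq : q ≠ 0) (R : T.Trapezoid) : R.set.Nonempty := by
  by_contra h
  rw [Set.not_nonempty_iff_eq_empty] at h
  have h0 : T.mu R.set = 0 := by rw [h, T.mu_empty]
  rw [T.mu_trapezoid_set hq R] at h0
  have hq0 : (q : ℝ≥0∞) ≠ 0 := by exact_mod_cast hq
  have hqt : (q : ℝ≥0∞) ≠ ⊤ := ENNReal.natCast_ne_top q
  have hW : (q : ℝ≥0∞) ^ (T.lev R.root) ≠ 0 := (ENNReal.zpow_pos hq0 hqt _).ne'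
  have hh := R.height_pos
  have hH : ((R.height : ℕ) : ℝ≥0∞) ≠ 0 := by
    simp only [ne_eq, Nat.cast_eq_zero]
    omega
  exact (mul_ne_zero hH hW) h0

lemma mu_trapezoid_set_ne_zero (hq : q ≠ 0) (R : T.Trapezoid) : T.mu R.set ≠ 0 := by
  rw [T.mu_trapezoid_set hq R]
  have hq0 : (q : ℝ≥0∞) ≠ 0 := by exact_mod_cast hq
  have hqt : (q : ℝ≥0∞) ≠ ⊤ := ENNReal.natCast_ne_top q
  have hh := R.height_pos
  exact mul_ne_zero (by simp only [ne_eq, Nat.cast_eq_zero]; omega)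
    (ENNReal.zpow_pos hq0 hqt _).ne'

lemma mu_trapezoid_set_ne_top (hq : q ≠ 0) (R : T.Trapezoid) : T.mu R.set ≠ ⊤ := by
  rw [T.mu_trapezoid_set hq R]
  have hq0 : (q : ℝ≥0∞) ≠ 0 := by exact_mod_cast hq
  have hqt : (q : ℝ≥0∞) ≠ ⊤ := ENNReal.natCast_ne_top q
  exact ENNReal.mul_ne_top (ENNReal.natCast_ne_top _) (ENNReal.zpow_lt_top hq0 hqt _).ne

end HomTree

/-- Calderón–Zygmund covering of the level set of the maximal function:
there is a countable pairwise disjoint family `{R_i}` of admissible trapezoids with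
`Ω_{λ^p} = {M(|f|^p) > λ^p} ⊆ E = ⋃_i R̃_i` and
`μ(E) ≤ ∑_i μ(R̃_i) ≤ 4 ∑_i μ(R_i) ≤ 4 λ^{-p} ‖f‖_{L^p}^p`. -/
theorem maximal_level_set_covering {q : ℕ} (hq : 2 ≤ q) (T : HomTree q) (f : T.V → ℂ)
    (p : ℝ) (hp : 1 ≤ p) (hf : T.lpPow f p ≠ ⊤) (lam : ℝ≥0) (hlam : 0 < lam) :
    ∃ (ι : Type) (_ : Countable ι) (Rf : ι → T.Trapezoid),
      (Pairwise fun i j => Disjoint (Rf i).set (Rf j).set) ∧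
      {x | ((lam : ℝ≥0∞)) ^ p <
          T.maxFn (fun y => (‖f y‖₊ : ℝ≥0∞) ^ p) x} ⊆ ⋃ i, (Rf i).envelope ∧
      T.mu (⋃ i, (Rf i).envelope) ≤ ∑' i, T.mu (Rf i).envelope ∧
      (∑' i, T.mu (Rf i).envelope) ≤ 4 * ∑' i, T.mu (Rf i).set ∧
      4 * (∑' i, T.mu (Rf i).set) ≤ 4 * (T.lpPow f p / ((lam : ℝ≥0∞)) ^ p) := by
  classical
  have hqne : q ≠ 0 := by omega
  have hq0 : (q : ℝ≥0∞) ≠ 0 := by exact_mod_cast hqne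
  have hqt : (q : ℝ≥0∞) ≠ ⊤ := ENNReal.natCast_ne_top q
  set lp : ℝ≥0∞ := ((lam : ℝ≥0∞)) ^ p with hlp
  have hlam0 : ((lam : ℝ≥0∞)) ≠ 0 := by simp [hlam.ne']
  have hlamt : ((lam : ℝ≥0∞)) ≠ ⊤ := ENNReal.coe_ne_top
  have hlp0 : lp ≠ 0 := by
    rw [hlp]
    intro h
    rcases ENNReal.rpow_eq_zero_iff.1 h with ⟨h1, _⟩ | ⟨h1, _⟩
    · exact hlam0 h1
    · exact hlamt h1
  have hlpt : lp ≠ ⊤ := by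
    rw [hlp]
    intro h
    rcases ENNReal.rpow_eq_top_iff.1 h with ⟨h1, _⟩ | ⟨h1, _⟩
    · exact hlam0 h1
    · exact hlamt h1
  have hInt_le : ∀ R : T.Trapezoid,
      (∑' y : R.set, (‖f y.1‖₊ : ℝ≥0∞) ^ p * (q : ℝ≥0∞) ^ (T.lev y.1)) ≤ T.lpPow f p := by
    intro R
    calc (∑' y : R.set, (‖f y.1‖₊ : ℝ≥0∞) ^ p * (q : ℝ≥0∞) ^ (T.lev y.1))
        = ∑' x, R.set.indicator (fun x => (‖f x‖₊ : ℝ≥0∞) ^ p * (q : ℝ≥0∞) ^ (T.lev x)) x :=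
          tsum_subtype R.set (fun x => (‖f x‖₊ : ℝ≥0∞) ^ p * (q : ℝ≥0∞) ^ (T.lev x))
      _ ≤ ∑' x, (‖f x‖₊ : ℝ≥0∞) ^ p * (q : ℝ≥0∞) ^ (T.lev x) :=
          ENNReal.tsum_le_tsum (fun x => Set.indicator_le_self _ _ x)
      _ = T.lpPow f p := rfl
  set Good : Set T.Trapezoid := {R | lp * T.mu R.set <
    ∑' y : R.set, (‖f y.1‖₊ : ℝ≥0∞) ^ p * (q : ℝ≥0∞) ^ (T.lev y.1)} with hGood
  have hmuC : ∀ R ∈ Good, T.mu R.set ≤ T.lpPow f p / lp := by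
    intro R hR
    rw [ENNReal.le_div_iff_mul_le (Or.inl hlp0) (Or.inl hlpt), mul_comm]
    exact le_trans (le_of_lt hR) (hInt_le R)
  have hCt : T.lpPow f p / lp ≠ ⊤ := (ENNReal.div_lt_top hf hlp0).ne
  obtain ⟨n0, hn0⟩ : ∃ n : ℕ, T.lpPow f p / lp < 2 ^ n := by
    obtain ⟨n, hn⟩ := ENNReal.exists_nat_gt hCt
    refine ⟨n, lt_of_lt_of_le hn ?_⟩
    have h1 : (n : ℕ) ≤ 2 ^ n := Nat.le_of_lt Nat.lt_two_pow_self
    exact_mod_cast h1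
  set K : ℤ := (n0 : ℤ) with hK
  have hlevK : ∀ R ∈ Good, T.lev R.root ≤ K := by
    intro R hR
    by_contra hcon
    push_neg at hcon
    have h1 : (q : ℝ≥0∞) ^ (T.lev R.root) ≤ T.mu R.set := by
      rw [T.mu_trapezoid_set hqne R]
      have hh := R.height_pos
      calc (q : ℝ≥0∞) ^ (T.lev R.root) = 1 * (q : ℝ≥0∞) ^ (T.lev R.root) := (one_mul _).symm
        _ ≤ (R.height : ℝ≥0∞) * (q : ℝ≥0∞) ^ (T.lev R.root) :=
            mul_le_mul_left (by exact_mod_cast hh) _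
    have h2 : (2 : ℝ≥0∞) ^ n0 ≤ (q : ℝ≥0∞) ^ (T.lev R.root) := by
      calc (2 : ℝ≥0∞) ^ n0 ≤ (q : ℝ≥0∞) ^ n0 :=
            pow_le_pow_left₀ zero_le (by exact_mod_cast hq) n0
        _ = (q : ℝ≥0∞) ^ ((n0 : ℤ)) := (zpow_natCast _ n0).symm
        _ ≤ (q : ℝ≥0∞) ^ (T.lev R.root) :=
            ENNReal.zpow_le_of_le (by exact_mod_cast (show 1 ≤ q by omega)) (le_of_lt hcon)
    have hcontr := lt_of_lt_of_le hn0 (h2.trans (h1.trans (hmuC R hR)))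
    exact lt_irrefl _ hcontr
  have hexsel := fun (prev : Set T.Trapezoid) (n : ℕ) =>
    exists_maximal_disjoint {R | R ∈ Good ∧ T.lev R.root = K - n} prev
      (fun R : T.Trapezoid => R.set)
  choose pick hpick1 hpick2 hpick3 hpick4 using hexsel
  set H : ℕ → Set T.Trapezoid :=
    fun n => Nat.rec (∅ : Set T.Trapezoid) (fun m Hm => Hm ∪ pick Hm m) n with hH
  set SS : ℕ → Set T.Trapezoid := fun n => pick (H n) n with hSS
  have hHSS : ∀ n, H (n + 1) = H n ∪ SS n := fun n => rfl
  have hHmem : ∀ n Q, Q ∈ H n → ∃ m, m < n ∧ Q ∈ SS m := by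
    intro n
    induction n with
    | zero => intro Q hQ; exact absurd hQ (Set.notMem_empty Q)
    | succ m ih =>
      intro Q hQ
      rw [hHSS m] at hQ
      rcases hQ with hQ | hQ
      · obtain ⟨k, hk, hQk⟩ := ih Q hQ
        exact ⟨k, by omega, hQk⟩
      · exact ⟨m, by omega, hQ⟩
  set M : Set T.Trapezoid := ⋃ n, SS n with hM
  have hSSGood : ∀ n R, R ∈ SS n → R ∈ Good ∧ T.lev R.root = K - n := by
    intro n R hR
    exact hpick1 (H n) n hR
  have hMGood : ∀ R ∈ M, R ∈ Good := by
    intro R hR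
    obtain ⟨n, hn⟩ := Set.mem_iUnion.1 hR
    exact (hSSGood n R hn).1
  have hHmono : ∀ a b : ℕ, a ≤ b → H a ⊆ H b := by
    intro a b hab
    induction b, hab using Nat.le_induction with
    | base => exact subset_rfl
    | succ b hb ih => exact subset_trans ih (by rw [hHSS b]; exact Set.subset_union_left)
  have hMdisj : ∀ R ∈ M, ∀ Q ∈ M, R ≠ Q → Disjoint R.set Q.set := by
    intro R hR Q hQ hne
    obtain ⟨n, hn⟩ := Set.mem_iUnion.1 hR
    obtain ⟨m, hm⟩ := Set.mem_iUnion.1 hQ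
    rcases lt_trichotomy n m with h | h | h
    · have hRH : R ∈ H m :=
        hHmono (n + 1) m (by omega) (by rw [hHSS n]; exact Set.mem_union_right _ hn)
      exact (hpick3 (H m) m Q hm R hRH).symm
    · subst h
      exact hpick2 (H n) n R hn Q hm hne
    · have hQH : Q ∈ H n :=
        hHmono (m + 1) n (by omega) (by rw [hHSS m]; exact Set.mem_union_right _ hm)
      exact hpick3 (H n) n R hn Q hQH
  have hcover : ∀ R ∈ Good, ∃ R', R' ∈ M ∧ T.lev R.root ≤ T.lev R'.root ∧
      ¬ Disjoint R.set R'.set := by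
    intro R hR
    set n : ℕ := (K - T.lev R.root).toNat with hn
    have hlev := hlevK R hR
    have hKn : K - (n : ℤ) = T.lev R.root := by
      rw [hn, Int.toNat_of_nonneg (by omega)]
      ring
    by_cases hc : ∀ Q ∈ H n, Disjoint R.set Q.set
    · by_cases hc2 : ∀ Q ∈ SS n, R ≠ Q → Disjoint R.set Q.set
      · have hRSS : R ∈ SS n := hpick4 (H n) n R ⟨hR, by omega⟩ hc hc2
        refine ⟨R, Set.mem_iUnion.2 ⟨n, hRSS⟩, le_refl _, ?_⟩
        intro hdisj
        rw [disjoint_self] at hdisj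
        have hne := T.trapezoid_set_nonempty hqne R
        rw [Set.nonempty_iff_ne_empty] at hne
        exact hne hdisj
      · push_neg at hc2
        obtain ⟨Q, hQSS, hQne, hQnd⟩ := hc2
        refine ⟨Q, Set.mem_iUnion.2 ⟨n, hQSS⟩, ?_, hQnd⟩
        have := (hSSGood n Q hQSS).2
        omega
    · push_neg at hc
      obtain ⟨Q, hQH, hQnd⟩ := hc
      obtain ⟨m, hmn, hQSS⟩ := hHmem n Q hQH
      refine ⟨Q, Set.mem_iUnion.2 ⟨m, hQSS⟩, ?_, hQnd⟩
      have := (hSSGood m Q hQSS).2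
      omega
  refine ⟨↥M, inferInstance, fun i => i.1, ?_, ?_, ?_, ?_, ?_⟩
  · intro i j hij
    exact hMdisj i.1 i.2 j.1 j.2 (fun h => hij (Subtype.ext h))
  · intro x hx
    simp only [Set.mem_setOf_eq, HomTree.maxFn] at hx
    rw [lt_iSup_iff] at hx
    obtain ⟨R, hR⟩ := hx
    rw [lt_iSup_iff] at hR
    obtain ⟨hxR, hlt⟩ := hR
    have hRGood : R ∈ Good := by
      rw [hGood, Set.mem_setOf_eq]
      have h1 := T.mu_trapezoid_set_ne_zero hqne R
      have h2 := T.mu_trapezoid_set_ne_top hqne R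
      have h3 := (ENNReal.lt_div_iff_mul_lt (Or.inl h1) (Or.inl h2)).1 hlt
      simpa using h3
    obtain ⟨R', hR'M, hlev', hnd⟩ := hcover R hRGood
    obtain ⟨z, hz, hz'⟩ := Set.not_disjoint_iff.1 hnd
    have hsub := T.set_subset_envelope R R' hlev' hz hz'
    exact Set.mem_iUnion.2 ⟨⟨R', hR'M⟩, hsub hxR⟩
  · exact T.mu_iUnion_le _
  · calc (∑' i : ↥M, T.mu (i.1).envelope)
        ≤ ∑' i : ↥M, 4 * T.mu (i.1).set :=
          ENNReal.tsum_le_tsum (fun i => T.mu_trapezoid_envelope_le hqne i.1)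
      _ = 4 * ∑' i : ↥M, T.mu (i.1).set := ENNReal.tsum_mul_left
  · apply mul_le_mul_right
    have hterm : ∀ i : ↥M, T.mu (i.1).set ≤
        (∑' y : (i.1).set, (‖f y.1‖₊ : ℝ≥0∞) ^ p * (q : ℝ≥0∞) ^ (T.lev y.1)) / lp := by
      intro i
      rw [ENNReal.le_div_iff_mul_le (Or.inl hlp0) (Or.inl hlpt), mul_comm]
      exact le_of_lt (hMGood i.1 i.2)
    calc (∑' i : ↥M, T.mu (i.1).set)
        ≤ ∑' i : ↥M,
            (∑' y : (i.1).set, (‖f y.1‖₊ : ℝ≥0∞) ^ p * (q : ℝ≥0∞) ^ (T.lev y.1)) / lp :=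
          ENNReal.tsum_le_tsum hterm
      _ = (∑' i : ↥M, ∑' y : (i.1).set,
            (‖f y.1‖₊ : ℝ≥0∞) ^ p * (q : ℝ≥0∞) ^ (T.lev y.1)) / lp := by
          simp_rw [div_eq_mul_inv]
          rw [ENNReal.tsum_mul_right]
      _ ≤ (T.lpPow f p) / lp := by
          apply ENNReal.div_le_div_right
          have h1 : ∀ i : ↥M, (∑' y : (i.1).set,
              (‖f y.1‖₊ : ℝ≥0∞) ^ p * (q : ℝ≥0∞) ^ (T.lev y.1)) =
              treeMeasure (fun x => (‖f x‖₊ : ℝ≥0∞) ^ p * (q : ℝ≥0∞) ^ (T.lev x)) (i.1).set :=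
            fun i => (treeMeasure_apply
              (fun x => (‖f x‖₊ : ℝ≥0∞) ^ p * (q : ℝ≥0∞) ^ (T.lev x)) (i.1).set).symm
          simp_rw [h1]
          rw [← MeasureTheory.measure_iUnion
            (fun i j hij => hMdisj i.1 i.2 j.1 j.2 (fun h => hij (Subtype.ext h)))
            (fun _ => MeasurableSpace.measurableSet_top)]
          calc treeMeasure (fun x => (‖f x‖₊ : ℝ≥0∞) ^ p * (q : ℝ≥0∞) ^ (T.lev x))
                (⋃ i : ↥M, (i.1).set)
              ≤ treeMeasure (fun x => (‖f x‖₊ : ℝ≥0∞) ^ p * (q : ℝ≥0∞) ^ (T.lev x))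
                Set.univ := MeasureTheory.measure_mono (Set.subset_univ _)
            _ = T.lpPow f p := by
                rw [treeMeasure_apply]
                exact tsum_univ (fun x : T.V => (‖f x‖₊ : ℝ≥0∞) ^ p * (q : ℝ≥0∞) ^ (T.lev x))
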